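/- Let R be a commutative ring, (M,λ) a formed space over R, g ≥ 0, and f : H^{⊕g} → (M,λ) a morphism of formed spaces. Then f is injective, M = f(H^{⊕g}) ⊕ W as R-modules where W = {m ∈ M : λ(f(x), m) = 0 for all x ∈ H^{⊕g}}, the two summands are λ-orthogonal, and (M,λ) is isomorphic as a formed space to the orthogonal direct sum H^{⊕g} ⊕ (W, λ restricted to W). -/

import Mathlib

/-!
`omegaH` is unimodular: every basis vector `e_i` has an `omegaH`-dual vector `±e_{i'}`, with `i'`
the hyperbolic partner of `i`. Pairing with `λ ∘ f` of these dual vectors therefore gives a linear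
retraction `p : M → R^{2g}` of `f`, so `f` is injective and `M = range f ⊕ ker p`, and `ker p` is
exactly `W`. As `λ` is alternating, `W` is orthogonal to `range f` from both sides, so `λ` splits
as `omegaH` on the first summand plus `λ|_W` on the second.
-/

/-- The standard symplectic form on `R^n` (interleaved hyperbolic pairs), i.e. the form of the
hyperbolic formed space `H^{⊕ g}` when `n = 2g`. -/
def omegaH (R : Type) [CommRing R] (n : ℕ) (x y : Fin n → R) : R :=
  ∑ i : Fin n, ∑ j : Fin n, (if (i : ℕ) % 2 = 0 ∧ (j : ℕ) = (i : ℕ) + 1 then x i * y j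
    else if (j : ℕ) % 2 = 0 ∧ (i : ℕ) = (j : ℕ) + 1 then -(x i * y j) else 0)

open LinearMap

section Retraction

variable {R V M : Type*} [Ring R] [AddCommGroup V] [Module R V] [AddCommGroup M] [Module R M]
  {f : V →ₗ[R] M} {p : M →ₗ[R] V}

theorem LinearMap.isCompl_range_ker_of_leftInverse (h : Function.LeftInverse p f) :
    IsCompl (range f) (ker p) := by
  have hidem : IsIdempotentElem (f ∘ₗ p) := LinearMap.ext fun m => congrArg f (h (p m))
  rw [← range_comp_of_range_eq_top f (range_eq_top.2 h.surjective),
    ← ker_comp_of_ker_eq_bot p (ker_eq_bot.2 h.injective)]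
  exact hidem.isCompl

noncomputable def LinearMap.prodKerEquivOfLeftInverse (h : Function.LeftInverse p f) :
    M ≃ₗ[R] V × ker p :=
  (Submodule.prodEquivOfIsCompl _ _ (isCompl_range_ker_of_leftInverse h)).symm ≪≫ₗ
    (LinearEquiv.ofInjective f h.injective).symm.prodCongr (LinearEquiv.refl R _)

theorem LinearMap.prodKerEquivOfLeftInverse_symm_apply (h : Function.LeftInverse p f)
    (v : V × ker p) : (prodKerEquivOfLeftInverse h).symm v = f v.1 + v.2 := by
  simp [prodKerEquivOfLeftInverse]

end Retraction

section SymplecticBasis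

variable {R : Type} [CommRing R] {g : ℕ}

def symplecticPartner (i : Fin (2 * g)) : Fin (2 * g) :=
  if h : (i : ℕ) % 2 = 0 then ⟨i + 1, by omega⟩ else ⟨i - 1, by omega⟩

theorem symplecticPartner_val (i : Fin (2 * g)) :
    (symplecticPartner i : ℕ) = if (i : ℕ) % 2 = 0 then (i : ℕ) + 1 else (i : ℕ) - 1 := by
  unfold symplecticPartner
  split_ifs <;> rfl

theorem symplecticPartner_involutive : Function.Involutive (symplecticPartner (g := g)) := by
  intro i
  ext
  simp only [symplecticPartner_val]
  split_ifs <;> omega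

variable (R) in
def symplecticSign (i : Fin (2 * g)) : R := if (i : ℕ) % 2 = 0 then 1 else -1

theorem symplecticSign_mul_self (i : Fin (2 * g)) :
    symplecticSign R i * symplecticSign R i = 1 := by
  unfold symplecticSign
  split_ifs <;> simp

theorem omegaH_single_left (j : Fin (2 * g)) (c : R) (y : Fin (2 * g) → R) :
    omegaH R (2 * g) (Pi.single j c) y = c * symplecticSign R j * y (symplecticPartner j) := by
  rw [omegaH, Finset.sum_eq_single j (fun i _ hij => by simp [Pi.single_eq_of_ne hij]) (by simp),
    Finset.sum_eq_single (symplecticPartner j) ?_ (by simp)]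
  · rw [Pi.single_eq_same, symplecticPartner_val, symplecticSign]
    split_ifs <;> first | omega | ring
  · intro k _ hk
    have hk' : (k : ℕ) ≠ symplecticPartner j := fun h => hk (Fin.ext h)
    rw [symplecticPartner_val] at hk'
    split_ifs at hk' ⊢ <;> first | omega | simp

end SymplecticBasis

section HyperbolicRetraction

variable {R : Type} [CommRing R] {M : Type} [AddCommGroup M] [Module R M]
  (lam : M →ₗ[R] M →ₗ[R] R) {g : ℕ} (f : (Fin (2 * g) → R) →ₗ[R] M)

def hyperbolicRetraction : M →ₗ[R] (Fin (2 * g) → R) :=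
  LinearMap.pi fun i =>
    lam (f (Pi.single (symplecticPartner i) (symplecticSign R (symplecticPartner i))))

theorem leftInverse_hyperbolicRetraction
    (hf : ∀ x y, lam (f x) (f y) = omegaH R (2 * g) x y) :
    Function.LeftInverse (hyperbolicRetraction lam f) f := by
  intro x
  ext i
  rw [hyperbolicRetraction, pi_apply, hf, omegaH_single_left, symplecticSign_mul_self, one_mul,
    symplecticPartner_involutive]

theorem mem_ker_hyperbolicRetraction {m : M} :
    m ∈ ker (hyperbolicRetraction lam f) ↔ ∀ x, lam (f x) m = 0 := by
  refine ⟨fun hm => ?_, fun hm => funext fun i => hm _⟩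
  suffices (lam ∘ₗ f).flip m = 0 from LinearMap.congr_fun this
  refine pi_ext fun j c => ?_
  have hj := congr_fun hm (symplecticPartner j)
  rw [hyperbolicRetraction, pi_apply, symplecticPartner_involutive] at hj
  have hc : Pi.single j c = (c * symplecticSign R j) • Pi.single j (symplecticSign R j) := by
    rw [← Pi.single_smul, smul_eq_mul, mul_assoc, symplecticSign_mul_self, mul_one]
  simp [hc, hj]

end HyperbolicRetraction

theorem hyperbolic_splitting
    (R : Type) [CommRing R]
    (M : Type) [AddCommGroup M] [Module R M]
    (lam : M →ₗ[R] M →ₗ[R] R) (halt : ∀ v : M, lam v v = 0)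
    (g : ℕ) (f : (Fin (2 * g) → R) →ₗ[R] M)
    (hf : ∀ x y, lam (f x) (f y) = omegaH R (2 * g) x y)
    (W : Submodule R M) (hW : ∀ m : M, m ∈ W ↔ ∀ x, lam (f x) m = 0) :
    Function.Injective f ∧
    IsCompl (LinearMap.range f) W ∧
    (∀ x, ∀ w ∈ W, lam (f x) w = 0 ∧ lam w (f x) = 0) ∧
    ∃ e : M ≃ₗ[R] (Fin (2 * g) → R) × W,
      ∀ m m' : M, lam m m' =
        omegaH R (2 * g) (e m).1 (e m').1 + lam ((e m).2 : M) ((e m').2 : M) := by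
  have hp := leftInverse_hyperbolicRetraction lam f hf
  obtain rfl : W = ker (hyperbolicRetraction lam f) :=
    Submodule.ext fun m => (hW m).trans (mem_ker_hyperbolicRetraction lam f).symm
  have horth : ∀ x, ∀ w ∈ ker (hyperbolicRetraction lam f), lam (f x) w = 0 ∧ lam w (f x) = 0 :=
    fun x w hw => have h := (hW w).1 hw x; ⟨h, (IsAlt.eq_iff halt).1 h⟩
  refine ⟨hp.injective, isCompl_range_ker_of_leftInverse hp, horth,
    prodKerEquivOfLeftInverse hp, fun m m' => ?_⟩
  set e := prodKerEquivOfLeftInverse hp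
  conv_lhs => rw [← e.symm_apply_apply m, ← e.symm_apply_apply m',
    prodKerEquivOfLeftInverse_symm_apply, prodKerEquivOfLeftInverse_symm_apply]
  simp [hf, (horth _ _ (e m').2.2).1, (horth _ _ (e m).2.2).2]
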